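/- arXiv:1203.2509 — 4 statements merged into one kernel-verified Lean document; each statement's English description precedes it below -/
import Mathlib

section
/- Let g, g' be independent standard Gaussian vectors in a finite-dimensional real Hilbert space H, and let u be a linear operator on H. Then the random variable ⟨u g, u g⟩ − ⟨u g', u g'⟩ has the same distribution as 2⟨u g, u g'⟩. -/
open MeasureTheory ProbabilityTheory RealInnerProductSpace

/-- The standard Gaussian measure on the Euclidean space `ℝ^d`. -/
noncomputable def stdGaussian (d : ℕ) : Measure (EuclideanSpace ℝ (Fin d)) :=
  (Measure.pi fun _ : Fin d => gaussianReal 0 1).map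
    (MeasurableEquiv.toLp 2 (Fin d → ℝ))

/-!
The map `(x, y) ↦ ((x + y)/√2, (x - y)/√2)` preserves the law of a pair of independent standard
Gaussian vectors: on the characteristic function side it replaces the dual norms `‖L₁‖, ‖L₂‖` of
the two components of a functional by `‖L₁ + L₂‖/√2, ‖L₁ - L₂‖/√2`, which have the same sum of
squares by the parallelogram law. Applying it to `(g, g')` turns `‖u g‖² - ‖u g'‖²` into
`2⟪u g, u g'⟫` by polarization.
-/

section Norms

variable {F : Type*} [NormedAddCommGroup F] [InnerProductSpace ℝ F]

theorem norm_smul_add_sq_add_norm_smul_sub_sq {c s : ℝ} (hcs : c ^ 2 + s ^ 2 = 1) (a b : F) :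
    ‖c • a + s • b‖ ^ 2 + ‖s • a - c • b‖ ^ 2 = ‖a‖ ^ 2 + ‖b‖ ^ 2 := by
  simp only [norm_add_sq_real, norm_sub_sq_real, norm_smul, real_inner_smul_left,
    real_inner_smul_right, mul_pow, Real.norm_eq_abs, sq_abs]
  linear_combination (‖a‖ ^ 2 + ‖b‖ ^ 2) * hcs

theorem StrongDual.norm_smul_add_sq_add_norm_smul_sub_sq [CompleteSpace F] {c s : ℝ}
    (hcs : c ^ 2 + s ^ 2 = 1) (a b : StrongDual ℝ F) :
    ‖c • a + s • b‖ ^ 2 + ‖s • a - c • b‖ ^ 2 = ‖a‖ ^ 2 + ‖b‖ ^ 2 := by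
  let e := (InnerProductSpace.toDual ℝ F).symm
  rw [← e.norm_map, ← e.norm_map, ← e.norm_map a, ← e.norm_map b, map_add, map_sub,
    map_smul, map_smul, map_smul, map_smul]
  exact _root_.norm_smul_add_sq_add_norm_smul_sub_sq hcs (e a) (e b)

end Norms

section PairReflection

variable {E : Type*} [NormedAddCommGroup E] [NormedSpace ℝ E]

open ContinuousLinearMap

noncomputable def pairReflection (c s : ℝ) : E × E →L[ℝ] E × E :=
  (c • fst ℝ E E + s • snd ℝ E E).prod (s • fst ℝ E E - c • snd ℝ E E)

@[simp]
theorem pairReflection_apply (c s : ℝ) (p : E × E) :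
    pairReflection c s p = (c • p.1 + s • p.2, s • p.1 - c • p.2) := rfl

theorem StrongDual.comp_pairReflection_comp_inl (c s : ℝ) (L : StrongDual ℝ (E × E)) :
    (L.comp (pairReflection c s)).comp (inl ℝ E E) =
      c • L.comp (inl ℝ E E) + s • L.comp (inr ℝ E E) := by
  ext x
  simp only [coe_comp, Function.comp_apply, inl_apply, inr_apply, pairReflection_apply,
    add_apply, FunLike.coe_smul, Pi.smul_apply]
  rw [← map_smul, ← map_smul, ← map_add]
  simp

theorem StrongDual.comp_pairReflection_comp_inr (c s : ℝ) (L : StrongDual ℝ (E × E)) :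
    (L.comp (pairReflection c s)).comp (inr ℝ E E) =
      s • L.comp (inl ℝ E E) - c • L.comp (inr ℝ E E) := by
  ext x
  simp only [coe_comp, Function.comp_apply, inl_apply, inr_apply, pairReflection_apply,
    sub_apply, FunLike.coe_smul, Pi.smul_apply]
  rw [← map_smul, ← map_smul, ← map_sub]
  simp

end PairReflection

theorem map_pairReflection_stdGaussian_prod {E : Type*} [NormedAddCommGroup E]
    [InnerProductSpace ℝ E] [FiniteDimensional ℝ E] [MeasurableSpace E] [BorelSpace E]
    {c s : ℝ} (hcs : c ^ 2 + s ^ 2 = 1) :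
    ((stdGaussian E).prod (stdGaussian E)).map (pairReflection c s) =
      (stdGaussian E).prod (stdGaussian E) := by
  rw [← charFunDual_eq_prod_iff]
  intro L
  rw [charFunDual_map, charFunDual_prod, StrongDual.comp_pairReflection_comp_inl,
    StrongDual.comp_pairReflection_comp_inr]
  simp only [charFunDual_stdGaussian, ← Complex.exp_add]
  congr 1
  have h := congrArg (fun r : ℝ => (r : ℂ)) <| StrongDual.norm_smul_add_sq_add_norm_smul_sub_sq
    hcs (L.comp (.inl ℝ E E)) (L.comp (.inr ℝ E E))
  push_cast at h
  linear_combination (-1 / 2 : ℂ) * h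

theorem inner_self_sub_inner_self_comp_pairReflection {E F : Type*} [NormedAddCommGroup E]
    [InnerProductSpace ℝ E] [NormedAddCommGroup F] [InnerProductSpace ℝ F]
    (u : E →ₗ[ℝ] F) (c : ℝ) :
    (fun p : E × E => ⟪u p.1, u p.1⟫ - ⟪u p.2, u p.2⟫) ∘ pairReflection c c =
      fun p => 4 * c ^ 2 * ⟪u p.1, u p.2⟫ := by
  ext p
  simp only [Function.comp_apply, pairReflection_apply, map_add, map_sub, map_smul,
    inner_add_left, inner_add_right, inner_sub_left, inner_sub_right, real_inner_smul_left,
    real_inner_smul_right, real_inner_comm (u p.1) (u p.2)]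
  ring

theorem map_comp_eq_map_comp_of_measurePreserving {Ω α β : Type*} [MeasurableSpace Ω]
    [MeasurableSpace α] [MeasurableSpace β] {P : Measure Ω} {X : Ω → α} (hX : Measurable X)
    {R : α → α} (hR : MeasurePreserving R (P.map X) (P.map X)) {f : α → β} (hf : Measurable f) :
    P.map (f ∘ X) = P.map (f ∘ R ∘ X) := by
  rw [← Measure.map_map hf hX, ← hR.map_eq, Measure.map_map hf hR.measurable,
    Measure.map_map (hf.comp hR.measurable) hX]
  rfl

theorem stdGaussian_eq_stdGaussian_euclideanSpace (d : ℕ) :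
    _root_.stdGaussian d = ProbabilityTheory.stdGaussian (EuclideanSpace ℝ (Fin d)) :=
  map_pi_eq_stdGaussian

/-- If `g, g'` are independent standard Gaussian vectors in a finite-dimensional real
Hilbert space and `u` is a linear operator, then `⟨u g, u g⟩ − ⟨u g', u g'⟩` has the
same distribution as `2⟨u g, u g'⟩`. -/
theorem stmt1 {d : ℕ} {Ω : Type*} [MeasurableSpace Ω] (P : Measure Ω)
    [IsProbabilityMeasure P] (g g' : Ω → EuclideanSpace ℝ (Fin d))
    (hgm : Measurable g) (hg'm : Measurable g')
    (hg : Measure.map g P = stdGaussian d) (hg' : Measure.map g' P = stdGaussian d)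
    (hindep : IndepFun g g' P)
    (u : EuclideanSpace ℝ (Fin d) →ₗ[ℝ] EuclideanSpace ℝ (Fin d)) :
    Measure.map (fun ω => ⟪u (g ω), u (g ω)⟫ - ⟪u (g' ω), u (g' ω)⟫) P =
      Measure.map (fun ω => 2 * ⟪u (g ω), u (g' ω)⟫) P := by
  have hpair : Measurable fun ω => (g ω, g' ω) := hgm.prodMk hg'm
  have hlaw : P.map (fun ω => (g ω, g' ω)) =
      (ProbabilityTheory.stdGaussian _).prod (ProbabilityTheory.stdGaussian _) := by
    rw [(indepFun_iff_map_prod_eq_prod_map_map hgm.aemeasurable hg'm.aemeasurable).mp hindep,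
      hg, hg', stdGaussian_eq_stdGaussian_euclideanSpace]
  have hsq : ((√2)⁻¹ : ℝ) ^ 2 = 1 / 2 := by rw [inv_pow, Real.sq_sqrt zero_le_two, one_div]
  have hR : MeasurePreserving (pairReflection (√2)⁻¹ (√2)⁻¹) (P.map fun ω => (g ω, g' ω))
      (P.map fun ω => (g ω, g' ω)) := by
    rw [hlaw]
    exact ⟨(pairReflection _ _).continuous.measurable,
      map_pairReflection_stdGaussian_prod (by rw [hsq]; norm_num)⟩
  have hu : Continuous u := u.continuous_of_finiteDimensional
  have hdist := map_comp_eq_map_comp_of_measurePreserving hpair hR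
    (f := fun p => ⟪u p.1, u p.1⟫ - ⟪u p.2, u p.2⟫) (by fun_prop)
  rwa [← Function.comp_assoc, inner_self_sub_inner_self_comp_pairReflection, hsq,
    show (4 : ℝ) * (1 / 2) = 2 by norm_num] at hdist
end

section
/- Let H_1,…,H_d, K_1,…,K_d be finite-dimensional Hilbert spaces with n_j = dim(H_j)·dim(K_j) arranged so that n_1 ≤ … ≤ n_d. Then the natural identification map J from (H_1⊗_2 K_1) ⊗_ε ⋯ ⊗_ε (H_d⊗_2 K_d) to (H_1⊗_2⋯⊗_2 H_d) ⊗_ε (K_1⊗_2⋯⊗_2 K_d) has norm at most (n_1 ⋯ n_{d-1})^{1/2}. -/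
open Finset

private lemma keylem : ∀ (m : ℕ) (ι : Fin (m+1) → Type) (_ : ∀ j, Fintype (ι j))
    (T : ((j : Fin (m+1)) → ι j) → ℝ) (C : ℝ),
    (∀ x : (j : Fin (m+1)) → (ι j → ℝ), (∀ j, ∑ v, x j v ^ 2 ≤ 1) →
      |∑ f, T f * ∏ j, x j (f j)| ≤ C) →
    ∀ z : ((j : Fin (m+1)) → ι j) → ℝ,
    |∑ f, T f * z f| ≤
      Real.sqrt (∏ j : Fin m, (Fintype.card (ι j.castSucc) : ℝ)) * C *
        Real.sqrt (∑ f, z f ^ 2) := by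
  intro m
  induction m with
  | zero =>
    intro ι inst T C hC z
    let e : ι 0 ≃ ((j : Fin 1) → ι j) :=
      { toFun := fun v => Fin.cons v (fun i => i.elim0)
        invFun := fun f => f 0
        left_inv := fun v => by simp
        right_inv := fun f => by
          funext j
          refine Fin.cases ?_ (fun i => i.elim0) j
          simp }
    have hs : (0:ℝ) ≤ ∑ f, z f ^ 2 := Finset.sum_nonneg fun _ _ => sq_nonneg _
    rcases eq_or_lt_of_le hs with hs0 | hs0
    · have hz : ∀ f, z f = 0 := by
        intro f
        have := (Finset.sum_eq_zero_iff_of_nonneg (fun i _ => sq_nonneg (z i))).1 hs0.symm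
          f (Finset.mem_univ f)
        exact (pow_eq_zero_iff (two_ne_zero)).1 this
      simp [hz, ← hs0]
    · set s := ∑ f, z f ^ 2 with hsdef
      have hr : (0:ℝ) < Real.sqrt s := Real.sqrt_pos.2 hs0
      set r := Real.sqrt s with hrdef
      have hx := hC (Fin.cons (fun v => z (e v) / r) (fun i => i.elim0)) ?_
      · rw [show (∏ j : Fin 0, (Fintype.card (ι j.castSucc) : ℝ)) = 1 by simp,
          Real.sqrt_one, one_mul]
        have heq : ∀ f : (j : Fin 1) → ι j,
            (∏ j, (Fin.cons (fun v => z (e v) / r) (fun i => i.elim0) :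
              (j : Fin 1) → ι j → ℝ) j (f j)) = z f / r := by
          intro f
          rw [Fin.prod_univ_one]
          simp only [Fin.cons_zero]
          have hef : e (f 0) = f := by
            funext j
            refine Fin.cases ?_ (fun i => i.elim0) j
            rfl
          rw [hef]
        rw [Finset.sum_congr rfl (fun f _ => by rw [heq f])] at hx
        have hsum : ∑ f, T f * (z f / r) = (∑ f, T f * z f) / r := by
          rw [Finset.sum_div]
          exact Finset.sum_congr rfl fun f _ => by ring
        rw [hsum, abs_div, abs_of_pos hr, div_le_iff₀ hr] at hx
        linarith [hx]
      · intro j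
        refine Fin.cases ?_ (fun i => i.elim0) j
        rw [Fin.cons_zero]
        have hdiv : ∑ v, (z (e v) / r) ^ 2 = (∑ v, z (e v) ^ 2) / r ^ 2 := by
          rw [Finset.sum_div]; exact Finset.sum_congr rfl fun v _ => by ring
        rw [hdiv, e.sum_comp (fun f => z f ^ 2), hrdef, Real.sq_sqrt hs]
        rw [div_self (ne_of_gt hs0)]
  | succ m IH =>
    intro ι inst T C hC z
    classical
    -- C ≥ 0
    have hC0 : 0 ≤ C := by
      have h0 := hC (fun _ _ => 0) (by intro j; simp)
      simpa using h0
    set e := Fin.consEquiv ι with he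
    -- split the sum
    have hsplit : ∀ F : ((j : Fin (m+2)) → ι j) → ℝ,
        ∑ f, F f = ∑ a : ι 0, ∑ g : (j : Fin (m+1)) → ι j.succ, F (Fin.cons a g) := by
      intro F
      rw [← e.sum_comp F, Fintype.sum_prod_type]
      rfl
    -- per-slice bound from hC
    have hCslice : ∀ a : ι 0,
        ∀ x' : (j : Fin (m+1)) → (ι j.succ → ℝ), (∀ j, ∑ v, x' j v ^ 2 ≤ 1) →
        |∑ g : (j : Fin (m+1)) → ι j.succ,
            T (Fin.cons a g) * ∏ j, x' j (g j)| ≤ C := by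
      intro a x' hx'
      have key := hC (Fin.cons (fun v => if v = a then (1:ℝ) else 0) x') ?_
      · have hre : ∑ f, T f * ∏ j, (Fin.cons (fun v => if v = a then (1:ℝ) else 0) x' :
            (j : Fin (m+2)) → ι j → ℝ) j (f j)
            = ∑ g : (j : Fin (m+1)) → ι j.succ, T (Fin.cons a g) * ∏ j, x' j (g j) := by
          rw [hsplit]
          have hterm : ∀ (a' : ι 0) (g : (j : Fin (m+1)) → ι j.succ),
              T (Fin.cons a' g) * ∏ j, (Fin.cons (fun v => if v = a then (1:ℝ) else 0) x' :
                (j : Fin (m+2)) → ι j → ℝ) j (Fin.cons a' g j)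
              = (if a' = a then (1:ℝ) else 0) * (T (Fin.cons a' g) * ∏ j, x' j (g j)) := by
            intro a' g
            rw [Fin.prod_univ_succ]
            simp only [Fin.cons_zero, Fin.cons_succ]
            ring
          rw [Finset.sum_congr rfl (fun a' _ => Finset.sum_congr rfl (fun g _ => hterm a' g))]
          simp [← Finset.mul_sum, ite_mul]
        rwa [hre] at key
      · intro j
        refine Fin.cases ?_ (fun i => ?_) j
        · rw [Fin.cons_zero]
          have : ∑ v, ((if v = a then (1:ℝ) else 0)) ^ 2
              = ∑ v, ((if v = a then (1:ℝ) else 0)) := by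
            refine Finset.sum_congr rfl fun v _ => ?_
            by_cases h : v = a <;> simp [h]
          rw [this, Finset.sum_ite_eq' Finset.univ a (fun _ => (1:ℝ))]
          simp
        · rw [Fin.cons_succ]
          exact hx' i
    -- apply IH to each slice
    have hIH : ∀ a : ι 0,
        |∑ g : (j : Fin (m+1)) → ι j.succ, T (Fin.cons a g) * z (Fin.cons a g)| ≤
          Real.sqrt (∏ j : Fin m, (Fintype.card (ι j.castSucc.succ) : ℝ)) * C *
            Real.sqrt (∑ g : (j : Fin (m+1)) → ι j.succ, z (Fin.cons a g) ^ 2) := by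
      intro a
      exact IH (fun j => ι j.succ) (fun j => inferInstance)
        (fun g => T (Fin.cons a g)) C (hCslice a) (fun g => z (Fin.cons a g))
    set P := Real.sqrt (∏ j : Fin m, (Fintype.card (ι j.castSucc.succ) : ℝ)) with hP
    have hP0 : 0 ≤ P := Real.sqrt_nonneg _
    set u : ι 0 → ℝ := fun a => Real.sqrt (∑ g : (j : Fin (m+1)) → ι j.succ,
      z (Fin.cons a g) ^ 2) with hu
    have hu0 : ∀ a, 0 ≤ u a := fun a => Real.sqrt_nonneg _
    have step1 : |∑ f, T f * z f| ≤ P * C * ∑ a, u a := by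
      rw [hsplit (fun f => T f * z f)]
      calc |∑ a : ι 0, ∑ g : (j : Fin (m+1)) → ι j.succ, T (Fin.cons a g) * z (Fin.cons a g)|
          ≤ ∑ a : ι 0, |∑ g : (j : Fin (m+1)) → ι j.succ,
              T (Fin.cons a g) * z (Fin.cons a g)| := Finset.abs_sum_le_sum_abs _ _
        _ ≤ ∑ a : ι 0, P * C * u a := Finset.sum_le_sum fun a _ => hIH a
        _ = P * C * ∑ a, u a := by rw [Finset.mul_sum]
    -- Cauchy-Schwarz on the a-sum
    have step2 : ∑ a, u a ≤ Real.sqrt (Fintype.card (ι 0)) * Real.sqrt (∑ f, z f ^ 2) := by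
      have cs := Real.sum_mul_le_sqrt_mul_sqrt Finset.univ (fun _ : ι 0 => (1:ℝ)) u
      simp only [one_mul, one_pow] at cs
      have h1 : ∑ a : ι 0, (1:ℝ) = (Fintype.card (ι 0) : ℝ) := by simp
      have h2 : ∑ a, u a ^ 2 = ∑ f, z f ^ 2 := by
        rw [hsplit (fun f => z f ^ 2)]
        refine Finset.sum_congr rfl fun a _ => ?_
        exact Real.sq_sqrt (Finset.sum_nonneg fun _ _ => sq_nonneg _)
      rw [h1, h2] at cs
      exact cs
    have hz2 : 0 ≤ Real.sqrt (∑ f, z f ^ 2) := Real.sqrt_nonneg _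
    have final : |∑ f, T f * z f| ≤
        P * C * (Real.sqrt (Fintype.card (ι 0)) * Real.sqrt (∑ f, z f ^ 2)) :=
      step1.trans (by
        exact mul_le_mul_of_nonneg_left step2 (mul_nonneg hP0 hC0))
    refine final.trans (le_of_eq ?_)
    have hprod : (∏ j : Fin (m+1), (Fintype.card (ι j.castSucc) : ℝ))
        = (Fintype.card (ι 0) : ℝ) * ∏ j : Fin m, (Fintype.card (ι j.castSucc.succ) : ℝ) := by
      rw [Fin.prod_univ_succ]
      congr 1
    rw [hprod, Real.sqrt_mul (by positivity)]
    ring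


/-- Let `H_j, K_j` (`j = 1, …, d`, here `d = m+1`) be finite-dimensional Hilbert
spaces, with `n_j = dim H_j · dim K_j` non-decreasing.  The natural identification
`(H_1⊗₂K_1) ⊗_ε ⋯ ⊗_ε (H_d⊗₂K_d) → (H_1⊗₂⋯⊗₂H_d) ⊗_ε (K_1⊗₂⋯⊗₂K_d)` has norm at
most `(n_1⋯n_{d-1})^{1/2}`: if `C` bounds the `d`-fold injective tensor norm of `T`,
then the bilinear form of `T` on the unit balls of the two Hilbert tensor products is
bounded by `(n_1⋯n_{d-1})^{1/2} C`. -/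
theorem stmt11 (m : ℕ) (dH dK : Fin (m + 1) → ℕ)
    (hmono : Monotone fun j => dH j * dK j)
    (T : ((j : Fin (m + 1)) → Fin (dH j) × Fin (dK j)) → ℝ) (C : ℝ)
    (hC : ∀ x : (j : Fin (m + 1)) → (Fin (dH j) × Fin (dK j) → ℝ),
      (∀ j, ∑ v, x j v ^ 2 ≤ 1) →
      |∑ f : (j : Fin (m + 1)) → Fin (dH j) × Fin (dK j),
        T f * ∏ j, x j (f j)| ≤ C)
    (h : ((j : Fin (m + 1)) → Fin (dH j)) → ℝ)
    (k : ((j : Fin (m + 1)) → Fin (dK j)) → ℝ)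
    (hh : ∑ a, h a ^ 2 ≤ 1) (hk : ∑ b, k b ^ 2 ≤ 1) :
    |∑ f : (j : Fin (m + 1)) → Fin (dH j) × Fin (dK j),
        T f * h (fun j => (f j).1) * k (fun j => (f j).2)| ≤
      Real.sqrt (∏ j : Fin m, (dH j.castSucc * dK j.castSucc : ℝ)) * C := by
  set ι : Fin (m+1) → Type := fun j => Fin (dH j) × Fin (dK j) with hι
  set z : ((j : Fin (m+1)) → ι j) → ℝ :=
    fun f => h (fun j => (f j).1) * k (fun j => (f j).2) with hz
  have hC0 : 0 ≤ C := by
    have h0 := hC (fun _ _ => 0) (by intro j; simp)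
    simpa using h0
  have key := keylem m ι (fun j => inferInstance) T C hC z
  have hLHS : ∑ f : (j : Fin (m + 1)) → Fin (dH j) × Fin (dK j),
      T f * h (fun j => (f j).1) * k (fun j => (f j).2) = ∑ f, T f * z f :=
    Finset.sum_congr rfl fun f _ => by rw [hz]; ring
  rw [hLHS]
  -- compute the sum of squares of z
  let pe : ((j : Fin (m+1)) → ι j) ≃
      (((j : Fin (m+1)) → Fin (dH j)) × ((j : Fin (m+1)) → Fin (dK j))) :=
    { toFun := fun f => (fun j => (f j).1, fun j => (f j).2)
      invFun := fun p j => (p.1 j, p.2 j)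
      left_inv := fun f => by funext j; rfl
      right_inv := fun p => rfl }
  have hsq : ∑ f, z f ^ 2 = (∑ a, h a ^ 2) * (∑ b, k b ^ 2) := by
    rw [← Equiv.sum_comp pe.symm (fun f => z f ^ 2), Fintype.sum_prod_type,
      Finset.sum_mul_sum]
    refine Finset.sum_congr rfl fun a _ => Finset.sum_congr rfl fun b _ => ?_
    show (h a * k b) ^ 2 = _
    ring
  have hsq1 : Real.sqrt (∑ f, z f ^ 2) ≤ 1 := by
    rw [hsq]
    have : (∑ a, h a ^ 2) * (∑ b, k b ^ 2) ≤ 1 := by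
      have h1 : 0 ≤ ∑ a, h a ^ 2 := Finset.sum_nonneg fun _ _ => sq_nonneg _
      have h2 : 0 ≤ ∑ b, k b ^ 2 := Finset.sum_nonneg fun _ _ => sq_nonneg _
      calc (∑ a, h a ^ 2) * (∑ b, k b ^ 2) ≤ 1 * 1 :=
            mul_le_mul hh hk h2 (by linarith)
        _ = 1 := by ring
    calc Real.sqrt ((∑ a, h a ^ 2) * (∑ b, k b ^ 2)) ≤ Real.sqrt 1 :=
          Real.sqrt_le_sqrt this
      _ = 1 := Real.sqrt_one
  have hcard : (∏ j : Fin m, (Fintype.card (ι j.castSucc) : ℝ))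
      = ∏ j : Fin m, (dH j.castSucc * dK j.castSucc : ℝ) := by
    refine Finset.prod_congr rfl fun j _ => ?_
    show ((Fintype.card (Fin (dH j.castSucc) × Fin (dK j.castSucc)) : ℕ) : ℝ) = _
    simp
  rw [hcard] at key
  refine key.trans ?_
  have hP0 : 0 ≤ Real.sqrt (∏ j : Fin m, (dH j.castSucc * dK j.castSucc : ℝ)) :=
    Real.sqrt_nonneg _
  calc Real.sqrt (∏ j : Fin m, (dH j.castSucc * dK j.castSucc : ℝ)) * C *
        Real.sqrt (∑ f, z f ^ 2)
      ≤ Real.sqrt (∏ j : Fin m, (dH j.castSucc * dK j.castSucc : ℝ)) * C * 1 :=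
        mul_le_mul_of_nonneg_left hsq1 (mul_nonneg hP0 hC0)
    _ = _ := by ring
end

section
/- Let n_1 ≤ n_2 ≤ ⋯ ≤ n_d and let Φ : ℓ_2^{n_1} ⊗_ε ⋯ ⊗_ε ℓ_2^{n_d} → ℓ_2^{n_1⋯n_d} be the natural identification. Then ‖Φ‖ ≤ (n_1 ⋯ n_{d-1})^{1/2}, i.e. for every tensor T, its Hilbert–Schmidt (Euclidean) norm is at most (n_1⋯n_{d-1})^{1/2} times its injective tensor norm. -/
/-!
Fixing the first index of `T` to `i` gives a slice of order `d - 1` whose injective norm is at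
most that of `T` (test against `x₁ = eᵢ`). Hence by induction on `d` each of the `n₁` slices has
squared Euclidean norm at most `n₂⋯n_{d-1} C²`; summing over `i` gives `n₁⋯n_{d-1} C²`. For
`d = 1`, testing against `T / ‖T‖₂` shows that the Euclidean norm is the injective norm.
-/

open Finset

def InjectiveNormLE {m : ℕ} {n : Fin m → ℕ} (T : ((j : Fin m) → Fin (n j)) → ℝ) (C : ℝ) : Prop :=
  ∀ x : (j : Fin m) → Fin (n j) → ℝ, (∀ j, ∑ v, x j v ^ 2 ≤ 1) →
    |∑ f : (j : Fin m) → Fin (n j), T f * ∏ j, x j (f j)| ≤ C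

lemma sum_pi_fin_succ {m : ℕ} {α : Fin (m + 1) → Type*} [∀ j, Fintype (α j)]
    {M : Type*} [AddCommMonoid M] (F : ((j : Fin (m + 1)) → α j) → M) :
    ∑ f, F f = ∑ i : α 0, ∑ g : (j : Fin m) → α j.succ, F (Fin.cons i g) := by
  rw [← (Fin.consEquiv α).sum_comp, Fintype.sum_prod_type]
  rfl

lemma sum_sq_le_sq_of_forall_abs_sum_mul_le {ι : Type*} [Fintype ι] (v : ι → ℝ) (C : ℝ)
    (hC : ∀ x : ι → ℝ, ∑ i, x i ^ 2 ≤ 1 → |∑ i, v i * x i| ≤ C) :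
    ∑ i, v i ^ 2 ≤ C ^ 2 := by
  set S := ∑ i, v i ^ 2
  have hS : 0 ≤ S := sum_nonneg fun i _ => sq_nonneg _
  rcases hS.eq_or_lt with hS0 | hSpos
  · rw [← hS0]; positivity
  set s := √S
  have hs : 0 < s := Real.sqrt_pos.2 hSpos
  have hss : s ^ 2 = S := Real.sq_sqrt hS
  have hunit : ∑ i, (v i / s) ^ 2 = 1 := by
    simp_rw [div_pow, ← sum_div, hss]
    exact div_self hSpos.ne'
  have hpair : ∑ i, v i * (v i / s) = s := by
    rw [show ∑ i, v i * (v i / s) = S / s by simp only [S, sum_div, mul_div_assoc', sq], ← hss]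
    field_simp
  have hsC : s ≤ C := by simpa [hpair, abs_of_pos hs] using hC _ hunit.le
  rw [← hss]
  exact pow_le_pow_left₀ hs.le hsC 2

namespace InjectiveNormLE

variable {m : ℕ} {n : Fin (m + 1) → ℕ} {T : ((j : Fin (m + 1)) → Fin (n j)) → ℝ} {C : ℝ}

lemma nonneg (hT : InjectiveNormLE T C) : 0 ≤ C := by
  simpa using (hT 0 (by simp)).trans' (abs_nonneg _)

lemma slice (hT : InjectiveNormLE T C) (i : Fin (n 0)) :
    InjectiveNormLE (fun g : (j : Fin m) → Fin (n j.succ) => T (Fin.cons i g)) C := by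
  intro x hx
  let y : (j : Fin (m + 1)) → Fin (n j) → ℝ := Fin.cons (Pi.single i 1) x
  have hunit : ∀ j, ∑ v, y j v ^ 2 ≤ 1 :=
    Fin.cases (by simp [y, Pi.single_apply]) (by simpa [y] using hx)
  convert hT y hunit using 2
  rw [sum_pi_fin_succ, sum_eq_single i (fun i' _ hi' => by simp [y, Fin.prod_univ_succ, hi'])
    (by simp)]
  simp [y, Fin.prod_univ_succ]

lemma sum_sq_le_of_fin_one {n : Fin 1 → ℕ} {T : ((j : Fin 1) → Fin (n j)) → ℝ}
    (hT : InjectiveNormLE T C) : ∑ f, T f ^ 2 ≤ C ^ 2 := by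
  rw [sum_pi_fin_succ]
  simp only [Fintype.sum_unique]
  refine sum_sq_le_sq_of_forall_abs_sum_mul_le _ C fun u hu => ?_
  convert hT (Fin.cons u default) (Fin.cases (by simpa using hu) fun j => j.elim0) using 2
  rw [sum_pi_fin_succ]
  simp

theorem sum_sq_le_prod_mul_sq : ∀ {m : ℕ} {n : Fin (m + 1) → ℕ}
    {T : ((j : Fin (m + 1)) → Fin (n j)) → ℝ} {C : ℝ}, InjectiveNormLE T C →
    ∑ f, T f ^ 2 ≤ (∏ j : Fin m, (n j.castSucc : ℝ)) * C ^ 2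
  | 0, _, _, _, hT => by simpa using hT.sum_sq_le_of_fin_one
  | m + 1, n, T, C, hT => calc
      ∑ f, T f ^ 2 = ∑ i : Fin (n 0), ∑ g : (j : Fin (m + 1)) → Fin (n j.succ),
          T (Fin.cons i g) ^ 2 := sum_pi_fin_succ _
      _ ≤ ∑ _i : Fin (n 0), (∏ j : Fin m, (n j.castSucc.succ : ℝ)) * C ^ 2 :=
          sum_le_sum fun i _ => (hT.slice i).sum_sq_le_prod_mul_sq
      _ = (∏ j : Fin (m + 1), (n j.castSucc : ℝ)) * C ^ 2 := by
          simp [Fin.prod_univ_succ, mul_assoc]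

end InjectiveNormLE

theorem stmt12_general (m : ℕ) (n : Fin (m + 1) → ℕ)
    (T : ((j : Fin (m + 1)) → Fin (n j)) → ℝ) (C : ℝ)
    (hC : ∀ x : (j : Fin (m + 1)) → (Fin (n j) → ℝ),
      (∀ j, ∑ v, x j v ^ 2 ≤ 1) →
      |∑ f : (j : Fin (m + 1)) → Fin (n j), T f * ∏ j, x j (f j)| ≤ C) :
    Real.sqrt (∑ f : (j : Fin (m + 1)) → Fin (n j), T f ^ 2) ≤
      Real.sqrt (∏ j : Fin m, (n j.castSucc : ℝ)) * C := by
  have hT : InjectiveNormLE T C := hC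
  have hP : 0 ≤ ∏ j : Fin m, (n j.castSucc : ℝ) := by positivity
  calc √(∑ f, T f ^ 2) ≤ √((∏ j : Fin m, (n j.castSucc : ℝ)) * C ^ 2) :=
        Real.sqrt_le_sqrt hT.sum_sq_le_prod_mul_sq
    _ = √(∏ j : Fin m, (n j.castSucc : ℝ)) * C := by
        rw [Real.sqrt_mul hP, Real.sqrt_sq hT.nonneg]

/-- For `n_1 ≤ ⋯ ≤ n_d` (here `d = m+1`), the natural identification
`Φ : ℓ_2^{n_1} ⊗_ε ⋯ ⊗_ε ℓ_2^{n_d} → ℓ_2^{n_1⋯n_d}` has norm at most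
`(n_1⋯n_{d-1})^{1/2}`: if `C` bounds the injective tensor norm of `T`, then its
Euclidean norm is at most `(n_1⋯n_{d-1})^{1/2} C`. -/
theorem stmt12 (m : ℕ) (n : Fin (m + 1) → ℕ) (hmono : Monotone n)
    (T : ((j : Fin (m + 1)) → Fin (n j)) → ℝ) (C : ℝ)
    (hC : ∀ x : (j : Fin (m + 1)) → (Fin (n j) → ℝ),
      (∀ j, ∑ v, x j v ^ 2 ≤ 1) →
      |∑ f : (j : Fin (m + 1)) → Fin (n j), T f * ∏ j, x j (f j)| ≤ C) :
    Real.sqrt (∑ f : (j : Fin (m + 1)) → Fin (n j), T f ^ 2) ≤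
      Real.sqrt (∏ j : Fin m, (n j.castSucc : ℝ)) * C :=
  stmt12_general m n T C hC
end

section
/- Let n_1 ≤ ⋯ ≤ n_d and let Φ : ℓ_2^{n_1} ⊗_ε ⋯ ⊗_ε ℓ_2^{n_d} → ℓ_2^{n_1⋯n_d} be the natural identification. Then ‖Φ‖ ≥ d^{-3/2} (n_1⋯n_{d-1})^{1/2}. -/
/-!
When `n₁ ⋯ n_{d-1} ≤ n_d` (in particular when `d ≤ 2`), an isometric embedding of
`ℓ₂^{n₁⋯n_{d-1}}` into `ℓ₂^{n_d}`, read as a `d`-tensor, has injective norm at most `1` and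
Euclidean norm `(n₁⋯n_{d-1})^{1/2}`.

For `d ≥ 3` we take a sign tensor `ε` scaled by `B = (d³ n_d)^{1/2}`; its Euclidean norm is
`(n₁⋯n_d)^{1/2} / B`. Contracting a random `ε` with `x₁ ⊗ ⋯ ⊗ x_{d-1}` gives a vector of
`n_d` independent Rademacher sums of variance at most `1`. Comparing their even moments with
Gaussian ones gives `𝔼 exp(λ V²) ≤ (1 - 2λ)⁻¹`, so the contraction is longer than `A` with
probability at most `(1 - 2λ)^{-n_d} e^{-λA²}`. A union bound over `θ`-nets of the unit balls
(of size `(1 + 2/θ)^{n_j}` by a volume argument) shows that some `ε` keeps every net point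
below `A`, and multilinearity turns this into the bound `A / (1 - (d-1)θ)` on the whole unit
balls. With `θ = 1/(7d)` and `λ = 9/20` the count closes for every `d ≥ 3`.
-/

/-- The injective tensor norm of `T ∈ ℓ_2^{n_1} ⊗ ⋯ ⊗ ℓ_2^{n_d}`:
the supremum of `|⟨T, x_1 ⊗ ⋯ ⊗ x_d⟩|` over unit balls. -/
noncomputable def injNorm {d : ℕ} {n : Fin d → ℕ}
    (T : ((j : Fin d) → Fin (n j)) → ℝ) : ℝ :=
  sSup {r | ∃ x : (j : Fin d) → (Fin (n j) → ℝ),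
    (∀ j, ∑ v, x j v ^ 2 ≤ 1) ∧
    r = |∑ f : (j : Fin d) → Fin (n j), T f * ∏ j, x j (f j)|}

open Finset Metric Module MeasureTheory
open scoped Nat

-- At `n = 0` the truncated `2 * 0 - 1 = 0` gives `0‼ = 1`, the value `(-1)‼` should have.
theorem Nat.factorial_two_mul_eq (n : ℕ) : (2 * n)! = 2 ^ n * n ! * (2 * n - 1)‼ := by
  cases n with
  | zero => rfl
  | succ n =>
    rw [show 2 * (n + 1) = 2 * n + 1 + 1 by ring, Nat.factorial_eq_mul_doubleFactorial,
      show 2 * n + 1 + 1 = 2 * (n + 1) by ring, Nat.doubleFactorial_two_mul]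
    rfl

theorem Nat.choose_two_mul_mul_doubleFactorial_le {j k : ℕ} (h : j ≤ k) :
    (2 * k).choose (2 * j) * (2 * (k - j) - 1)‼ ≤ k.choose j * (2 * k - 1)‼ := by
  obtain ⟨a, rfl⟩ := Nat.exists_eq_add_of_le h
  rw [Nat.add_sub_cancel_left]
  refine Nat.le_of_mul_le_mul_right (c := (2 * j)! * (2 ^ a * a !)) ?_
    (Nat.mul_pos (Nat.factorial_pos _) (Nat.mul_pos (Nat.two_pow_pos a) (Nat.factorial_pos _)))
  calc (2 * (j + a)).choose (2 * j) * (2 * a - 1)‼ * ((2 * j)! * (2 ^ a * a !))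
      = (2 * j + 2 * a).choose (2 * j) * (2 * j)! * (2 * a)! := by
        rw [Nat.factorial_two_mul_eq a, mul_add]; ring
    _ = (2 * j + 2 * a)! := by
        rw [← Nat.choose_mul_factorial_mul_factorial (Nat.le_add_right _ _),
          Nat.add_sub_cancel_left]
    _ = 2 ^ j * j ! * (2 ^ a * a !) * (j + a).choose j * (2 * (j + a) - 1)‼ := by
        rw [← mul_add, Nat.factorial_two_mul_eq,
          ← Nat.choose_mul_factorial_mul_factorial (Nat.le_add_right j a),
          Nat.add_sub_cancel_left, pow_add]
        ring
    _ ≤ (2 * j)! * (2 ^ a * a !) * (j + a).choose j * (2 * (j + a) - 1)‼ := by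
        gcongr
        exact Nat.two_pow_mul_factorial_le_factorial_two_mul j
    _ = (j + a).choose j * (2 * (j + a) - 1)‼ * ((2 * j)! * (2 ^ a * a !)) := by ring

theorem Nat.doubleFactorial_two_mul_sub_one_le (k : ℕ) : (2 * k - 1)‼ ≤ 2 ^ k * k ! := by
  rw [← Nat.doubleFactorial_two_mul]
  induction k with
  | zero => rfl
  | succ k ih =>
    rw [show 2 * (k + 1) - 1 = 2 * k + 1 by omega, show 2 * (k + 1) = 2 * k + 2 by ring,
      Nat.doubleFactorial_add_one, Nat.doubleFactorial_add_two]
    exact Nat.mul_le_mul (by omega) ih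

theorem sum_range_two_mul_add_one {M : Type*} [AddCommMonoid M] (f : ℕ → M) (k : ℕ) :
    ∑ p ∈ range (2 * k + 1), f p =
      ∑ j ∈ range (k + 1), f (2 * j) + ∑ j ∈ range k, f (2 * j + 1) := by
  induction k with
  | zero => simp
  | succ k ih =>
    rw [show 2 * (k + 1) + 1 = 2 * k + 1 + 1 + 1 by ring, sum_range_succ, sum_range_succ, ih,
      sum_range_succ (fun j => f (2 * j)) (k + 1), sum_range_succ (fun j => f (2 * j + 1)) k,
      show 2 * (k + 1) = 2 * k + 1 + 1 by ring]
    abel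

noncomputable def boolSign (b : Bool) : ℝ := if b then 1 else -1

@[simp] theorem boolSign_sq (b : Bool) : boolSign b ^ 2 = 1 := by cases b <;> simp [boolSign]

@[simp] theorem boolSign_not (b : Bool) : boolSign (!b) = -boolSign b := by
  cases b <;> simp [boolSign]

section Rademacher

variable {ι : Type*} [Fintype ι] [DecidableEq ι]

theorem sum_boolSign_pow_mul (i : ι) (p : ℕ) {G : (ι → Bool) → ℝ}
    (hG : ∀ σ b, G (Function.update σ i b) = G σ) :
    ∑ σ : ι → Bool, boolSign (σ i) ^ p * G σ = if Even p then ∑ σ, G σ else 0 := by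
  split_ifs with hp
  · obtain ⟨r, rfl⟩ := hp
    simp [← two_mul, pow_mul]
  have hflip : Function.Involutive fun σ : ι → Bool => Function.update σ i (!σ i) := by
    intro σ
    simp
  have hanti : ∑ σ : ι → Bool, boolSign (σ i) ^ p * G σ =
      -∑ σ : ι → Bool, boolSign (σ i) ^ p * G σ := by
    conv_lhs => rw [← Equiv.sum_comp (hflip.toPerm _)]
    simp [hG, (Nat.not_even_iff_odd.1 hp).neg_pow]
  linarith

theorem sum_mul_boolSign_add_pow (i : ι) (x : ℝ) {G : (ι → Bool) → ℝ}
    (hG : ∀ σ b, G (Function.update σ i b) = G σ) (k : ℕ) :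
    ∑ σ : ι → Bool, (x * boolSign (σ i) + G σ) ^ (2 * k) =
      ∑ j ∈ range (k + 1), ((2 * k).choose (2 * j) : ℝ) * x ^ (2 * j) *
        ∑ σ, G σ ^ (2 * (k - j)) := by
  have hterm : ∀ p, ∑ σ : ι → Bool, (x * boolSign (σ i)) ^ p * G σ ^ (2 * k - p) *
      ((2 * k).choose p : ℝ) =
      if Even p then ((2 * k).choose p : ℝ) * x ^ p * ∑ σ, G σ ^ (2 * k - p) else 0 := by
    intro p
    rw [← mul_ite_zero,
      ← sum_boolSign_pow_mul i p (G := fun σ => G σ ^ (2 * k - p)) (by simp [hG]), mul_sum]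
    exact sum_congr rfl fun σ _ => by ring
  simp_rw [add_pow]
  rw [sum_comm, sum_congr rfl fun p _ => hterm p, sum_range_two_mul_add_one]
  simp [← Nat.mul_sub]

theorem sum_rademacher_pow_le (a : ι → ℝ) (s : Finset ι) (k : ℕ) :
    ∑ σ : ι → Bool, (∑ i ∈ s, a i * boolSign (σ i)) ^ (2 * k) ≤
      2 ^ Fintype.card ι * (2 * k - 1)‼ * (∑ i ∈ s, a i ^ 2) ^ k := by
  induction s using Finset.induction_on generalizing k with
  | empty => cases k <;> simp
  | insert i s hi ih =>
    set X : (ι → Bool) → ℝ := fun σ => ∑ i' ∈ s, a i' * boolSign (σ i')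
    set S := ∑ i' ∈ s, a i' ^ 2
    have hX : ∀ σ b, X (Function.update σ i b) = X σ := fun σ b =>
      sum_congr rfl fun i' hi' => by rw [Function.update_of_ne (ne_of_mem_of_not_mem hi' hi)]
    simp_rw [sum_insert hi]
    rw [sum_mul_boolSign_add_pow i (a i) hX k, add_pow, mul_sum]
    refine sum_le_sum fun j hj => ?_
    have hcoef : ((2 * k).choose (2 * j) : ℝ) * (2 * (k - j) - 1)‼ ≤ k.choose j * (2 * k - 1)‼ := by
      exact_mod_cast Nat.choose_two_mul_mul_doubleFactorial_le (Nat.lt_succ_iff.1 (mem_range.1 hj))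
    have hx : 0 ≤ a i ^ (2 * j) := (even_two_mul j).pow_nonneg _
    calc ((2 * k).choose (2 * j) : ℝ) * a i ^ (2 * j) * ∑ σ, X σ ^ (2 * (k - j))
        ≤ ((2 * k).choose (2 * j) : ℝ) * a i ^ (2 * j) *
          (2 ^ Fintype.card ι * (2 * (k - j) - 1)‼ * S ^ (k - j)) :=
          mul_le_mul_of_nonneg_left (ih (k - j)) (mul_nonneg (Nat.cast_nonneg _) hx)
      _ = ((2 * k).choose (2 * j) * (2 * (k - j) - 1)‼) *
          (a i ^ (2 * j) * 2 ^ Fintype.card ι * S ^ (k - j)) := by ring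
      _ ≤ (k.choose j * (2 * k - 1)‼) * (a i ^ (2 * j) * 2 ^ Fintype.card ι * S ^ (k - j)) := by
          gcongr
      _ = 2 ^ Fintype.card ι * (2 * k - 1)‼ * ((a i ^ 2) ^ j * S ^ (k - j) * k.choose j) := by
          ring

theorem sum_exp_mul_sq_rademacher_le (a : ι → ℝ) {t : ℝ} (ht : 0 ≤ t)
    (h : 2 * t * ∑ i, a i ^ 2 < 1) :
    ∑ σ : ι → Bool, Real.exp (t * (∑ i, a i * boolSign (σ i)) ^ 2) ≤
      2 ^ Fintype.card ι / (1 - 2 * t * ∑ i, a i ^ 2) := by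
  set S := ∑ i, a i ^ 2
  set X : (ι → Bool) → ℝ := fun σ => ∑ i, a i * boolSign (σ i)
  have hterm : ∀ k : ℕ, ∑ σ, (t * X σ ^ 2) ^ k / k ! ≤ 2 ^ Fintype.card ι * (2 * t * S) ^ k := by
    intro k
    have hdf : ((2 * k - 1)‼ : ℝ) ≤ 2 ^ k * k ! := by
      exact_mod_cast Nat.doubleFactorial_two_mul_sub_one_le k
    calc ∑ σ, (t * X σ ^ 2) ^ k / k ! = t ^ k / k ! * ∑ σ, X σ ^ (2 * k) := by
          rw [mul_sum]
          exact sum_congr rfl fun σ _ => by ring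
      _ ≤ t ^ k / k ! * (2 ^ Fintype.card ι * (2 * k - 1)‼ * S ^ k) := by
          gcongr
          exact sum_rademacher_pow_le a univ k
      _ ≤ t ^ k / k ! * (2 ^ Fintype.card ι * (2 ^ k * k !) * S ^ k) := by gcongr
      _ = 2 ^ Fintype.card ι * (2 * t * S) ^ k := by
          field_simp
          ring
  refine hasSum_le hterm (hasSum_sum fun σ _ => ?_)
    ((hasSum_geometric_of_lt_one (by positivity) h).mul_left _)
  rw [Real.exp_eq_exp_ℝ]
  exact NormedSpace.expSeries_div_hasSum_exp _

end Rademacher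

section SignMatrix

variable {C G : Type*} [Fintype C] [DecidableEq C] [Fintype G] [DecidableEq G]

theorem sum_exp_mul_sum_sq_signMatrix_le (a : G → ℝ) (ha : ∑ g, a g ^ 2 ≤ 1) {t : ℝ}
    (ht0 : 0 ≤ t) (ht : t < 1 / 2) :
    ∑ M : C → G → Bool, Real.exp (t * ∑ c, (∑ g, a g * boolSign (M c g)) ^ 2) ≤
      Fintype.card (C → G → Bool) / (1 - 2 * t) ^ Fintype.card C := by
  have hrow : ∑ ρ : G → Bool, Real.exp (t * (∑ g, a g * boolSign (ρ g)) ^ 2) ≤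
      2 ^ Fintype.card G / (1 - 2 * t) :=
    (sum_exp_mul_sq_rademacher_le a ht0 (by nlinarith)).trans
      (div_le_div_of_nonneg_left (by positivity) (by linarith) (by nlinarith))
  calc ∑ M : C → G → Bool, Real.exp (t * ∑ c, (∑ g, a g * boolSign (M c g)) ^ 2)
      = ∏ c : C, ∑ ρ : G → Bool, Real.exp (t * (∑ g, a g * boolSign (ρ g)) ^ 2) := by
        rw [Fintype.prod_sum]
        exact sum_congr rfl fun M _ => by rw [mul_sum, Real.exp_sum]
    _ ≤ ∏ _c : C, (2 ^ Fintype.card G / (1 - 2 * t)) :=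
        prod_le_prod (fun _ _ => sum_nonneg fun _ _ => (Real.exp_pos _).le) fun _ _ => hrow
    _ = Fintype.card (C → G → Bool) / (1 - 2 * t) ^ Fintype.card C := by
        simp [prod_const, ← pow_mul, mul_comm]

theorem exists_signMatrix_forall_sum_sq_lt (𝒜 : Finset (G → ℝ))
    (h𝒜 : ∀ a ∈ 𝒜, ∑ g, a g ^ 2 ≤ 1) {t A : ℝ} (ht0 : 0 < t) (ht : t < 1 / 2)
    (hcount : #𝒜 < (1 - 2 * t) ^ Fintype.card C * Real.exp (t * A ^ 2)) :
    ∃ M : C → G → Bool, ∀ a ∈ 𝒜, ∑ c, (∑ g, a g * boolSign (M c g)) ^ 2 < A ^ 2 := by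
  set V : (G → ℝ) → (C → G → Bool) → ℝ := fun a M => ∑ c, (∑ g, a g * boolSign (M c g)) ^ 2
  have hpos : 0 < (1 - 2 * t) ^ Fintype.card C := pow_pos (by linarith) _
  have htotal : ∑ M, ∑ a ∈ 𝒜, Real.exp (t * (V a M - A ^ 2)) < ∑ _M : C → G → Bool, (1 : ℝ) := by
    calc ∑ M, ∑ a ∈ 𝒜, Real.exp (t * (V a M - A ^ 2))
        = ∑ a ∈ 𝒜, Real.exp (-(t * A ^ 2)) * ∑ M, Real.exp (t * V a M) := by
          rw [sum_comm]
          refine sum_congr rfl fun a _ => ?_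
          rw [mul_sum]
          exact sum_congr rfl fun M _ => by rw [← Real.exp_add]; ring_nf
      _ ≤ ∑ _a ∈ 𝒜, Real.exp (-(t * A ^ 2)) *
          (Fintype.card (C → G → Bool) / (1 - 2 * t) ^ Fintype.card C) := by
          gcongr with a ha
          exact sum_exp_mul_sum_sq_signMatrix_le a (h𝒜 a ha) ht0.le ht
      _ = #𝒜 * Real.exp (-(t * A ^ 2)) / (1 - 2 * t) ^ Fintype.card C *
          Fintype.card (C → G → Bool) := by rw [sum_const, nsmul_eq_mul]; ring
      _ < 1 * Fintype.card (C → G → Bool) := by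
          gcongr
          rw [div_lt_one hpos, Real.exp_neg, ← div_eq_mul_inv, div_lt_iff₀ (Real.exp_pos _)]
          exact hcount
      _ = ∑ _M : C → G → Bool, (1 : ℝ) := by simp
  obtain ⟨M, -, hM⟩ := exists_lt_of_sum_lt htotal
  refine ⟨M, fun a ha => ?_⟩
  have := (single_le_sum (fun a _ => (Real.exp_pos _).le) ha).trans_lt hM
  rw [Real.exp_lt_one_iff] at this
  nlinarith

end SignMatrix

section Nets

variable {E : Type*} [NormedAddCommGroup E] [NormedSpace ℝ E] [FiniteDimensional ℝ E]

theorem card_le_of_separated_subset_closedBall {θ : ℝ} (hθ : 0 < θ) {N : Finset E}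
    (hN : (N : Set E) ⊆ closedBall 0 1) (hsep : (N : Set E).Pairwise fun x y => θ ≤ dist x y) :
    (#N : ℝ) ≤ (1 + 2 / θ) ^ finrank ℝ E := by
  rcases subsingleton_or_nontrivial E with hE | hE
  · calc (#N : ℝ) ≤ 1 := by exact_mod_cast card_le_one_of_subsingleton N
      _ ≤ (1 + 2 / θ) ^ finrank ℝ E := one_le_pow₀ (by linarith [div_pos two_pos hθ])
  let _ : MeasurableSpace E := borel E
  have _ : BorelSpace E := ⟨rfl⟩
  set μ : Measure E := Measure.addHaar
  have hdisj : (N : Set E).PairwiseDisjoint fun y => ball y (θ / 2) := by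
    intro x hx y hy hxy
    refine ball_disjoint_ball ?_
    linarith [hsep hx hy hxy]
  have hsub : (⋃ y ∈ N, ball y (θ / 2)) ⊆ closedBall 0 (1 + θ / 2) := by
    refine Set.iUnion₂_subset fun y hy => ball_subset_closedBall.trans ?_
    refine closedBall_subset_closedBall' ?_
    linarith [mem_closedBall_zero_iff.1 (hN hy), dist_zero_right y]
  have hvol := (measure_biUnion_finset hdisj fun y _ => measurableSet_ball).symm.trans_le
    (measure_mono (μ := μ) hsub)
  simp only [Measure.addHaar_ball μ _ (by positivity : 0 ≤ θ / 2),
    Measure.addHaar_closedBall μ _ (by positivity : 0 ≤ 1 + θ / 2), sum_const, nsmul_eq_mul,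
    ← mul_assoc] at hvol
  have hball : μ (ball 0 1) ≠ 0 := (measure_ball_pos μ 0 one_pos).ne'
  have := (ENNReal.mul_le_mul_iff_left hball measure_ball_lt_top.ne).1 hvol
  rw [← ENNReal.ofReal_natCast, ← ENNReal.ofReal_mul (by positivity),
    ENNReal.ofReal_le_ofReal_iff (by positivity), ← le_div_iff₀ (by positivity), ← div_pow] at this
  rwa [show (1 + θ / 2) / (θ / 2) = 1 + 2 / θ by field_simp; ring] at this

theorem exists_finset_closedBall_subset_biUnion {θ : ℝ} (hθ : 0 < θ) :
    ∃ N : Finset E, (N : Set E) ⊆ closedBall 0 1 ∧ (#N : ℝ) ≤ (1 + 2 / θ) ^ finrank ℝ E ∧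
      closedBall 0 1 ⊆ ⋃ y ∈ N, closedBall y θ := by
  classical
  by_contra! hno
  -- Each separated set that is not a net can be enlarged by a point it does not cover.
  have hgrow : ∀ n : ℕ, ∃ N : Finset E, (N : Set E) ⊆ closedBall 0 1 ∧
      (N : Set E).Pairwise (fun x y => θ ≤ dist x y) ∧ #N = n := by
    intro n
    induction n with
    | zero => exact ⟨∅, by simp, by simp, rfl⟩
    | succ n ih =>
      obtain ⟨N, hN, hsep, rfl⟩ := ih
      obtain ⟨x, hx, hfar⟩ :=
        Set.not_subset.1 (hno N hN (card_le_of_separated_subset_closedBall hθ hN hsep))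
      simp only [Set.mem_iUnion, mem_closedBall, not_exists, not_le] at hfar
      have hxN : x ∉ N := fun h => (hfar x h).not_ge (by simpa using hθ.le)
      refine ⟨insert x N, ?_, ?_, card_insert_of_notMem hxN⟩
      · rw [coe_insert]
        exact Set.insert_subset hx hN
      · rw [coe_insert]
        refine hsep.insert fun y hy _ => ⟨(hfar y hy).le, ?_⟩
        rw [dist_comm]
        exact (hfar y hy).le
  obtain ⟨N, hN, hsep, hcard⟩ := hgrow (⌊(1 + 2 / θ) ^ finrank ℝ E⌋₊ + 1)
  have := card_le_of_separated_subset_closedBall hθ hN hsep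
  rw [hcard, Nat.cast_add_one] at this
  linarith [Nat.lt_floor_add_one ((1 + 2 / θ) ^ finrank ℝ E)]

end Nets

namespace ContinuousMultilinearMap

variable {ι : Type*} [Fintype ι] {E : ι → Type*} [∀ i, NormedAddCommGroup (E i)]
  [∀ i, NormedSpace ℝ (E i)] {F : Type*} [NormedAddCommGroup F] [NormedSpace ℝ F]

theorem opNorm_le_of_forall_norm_le_one (f : ContinuousMultilinearMap ℝ E F) {C : ℝ}
    (hC : 0 ≤ C) (h : ∀ m, (∀ i, ‖m i‖ ≤ 1) → ‖f m‖ ≤ C) : ‖f‖ ≤ C := by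
  refine f.opNorm_le_bound hC fun m => ?_
  by_cases hm : ∃ i, m i = 0
  · obtain ⟨i, hi⟩ := hm
    rw [f.map_coord_zero i hi, norm_zero]
    positivity
  push Not at hm
  have hpos : ∀ i, 0 < ‖m i‖ := fun i => norm_pos_iff.2 (hm i)
  have := h (fun i => ‖m i‖⁻¹ • m i) fun i => by
    rw [norm_smul, norm_inv, norm_norm, inv_mul_cancel₀ (hpos i).ne']
  rw [f.map_smul_univ, norm_smul, Real.norm_eq_abs, abs_of_nonneg (by positivity),
    prod_inv_distrib, inv_mul_le_iff₀ (prod_pos fun i _ => hpos i)] at this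
  linarith [mul_comm C (∏ i, ‖m i‖)]

theorem opNorm_le_of_net (f : ContinuousMultilinearMap ℝ E F) {θ A : ℝ} (hθ : 0 ≤ θ)
    (hιθ : Fintype.card ι * θ < 1) (Y : ∀ i, Set (E i)) (hY : ∀ i, Y i ⊆ closedBall 0 1)
    (hcover : ∀ i, closedBall (0 : E i) 1 ⊆ ⋃ y ∈ Y i, closedBall y θ)
    (hA : ∀ y : ∀ i, E i, (∀ i, y i ∈ Y i) → ‖f y‖ ≤ A) :
    ‖f‖ ≤ A / (1 - Fintype.card ι * θ) := by
  have hball : ∀ m : ∀ i, E i, (∀ i, ‖m i‖ ≤ 1) → ‖f m‖ ≤ A + Fintype.card ι * θ * ‖f‖ := by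
    intro m hm
    have hnear : ∀ i, ∃ y ∈ Y i, ‖m i - y‖ ≤ θ := fun i => by
      simpa [dist_eq_norm] using hcover i (mem_closedBall_zero_iff.2 (hm i))
    choose y hyY hy using hnear
    have hmax : max ‖m‖ ‖y‖ ≤ 1 := max_le ((pi_norm_le_iff_of_nonneg zero_le_one).2 hm)
      ((pi_norm_le_iff_of_nonneg zero_le_one).2 fun i => mem_closedBall_zero_iff.1 (hY i (hyY i)))
    calc ‖f m‖ ≤ ‖f y‖ + ‖f m - f y‖ := norm_le_norm_add_norm_sub' _ _
      _ ≤ A + ‖f‖ * Fintype.card ι * 1 * θ := by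
        gcongr
        · exact hA y hyY
        · refine (f.norm_image_sub_le m y).trans ?_
          gcongr
          · exact pow_le_one₀ (by positivity) hmax
          · exact (pi_norm_le_iff_of_nonneg hθ).2 hy
      _ = A + Fintype.card ι * θ * ‖f‖ := by ring
  have := opNorm_le_of_forall_norm_le_one f ((norm_nonneg _).trans (hball 0 fun i => by simp))
    hball
  rw [le_div_iff₀ (by linarith)]
  linarith

end ContinuousMultilinearMap

section TensorContract

variable {ι : Type*} [Fintype ι] [DecidableEq ι] {κ : ι → Type*} [∀ j, Fintype (κ j)]
  {C : Type*} [Fintype C] [DecidableEq C]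

noncomputable def tensorContract (S : C → ((j : ι) → κ j) → ℝ) :
    ContinuousMultilinearMap ℝ (fun j => EuclideanSpace ℝ (κ j)) (EuclideanSpace ℝ C) :=
  ∑ c, ∑ g, S c g • ((ContinuousMultilinearMap.mkPiAlgebra ℝ ι ℝ).compContinuousLinearMap
    (fun j => EuclideanSpace.proj (g j))).smulRight (EuclideanSpace.single c (1 : ℝ))

theorem tensorContract_apply (S : C → ((j : ι) → κ j) → ℝ)
    (y : (j : ι) → EuclideanSpace ℝ (κ j)) (c : C) :
    tensorContract S y c = ∑ g, S c g * ∏ j, y j (g j) := by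
  simp [tensorContract, Pi.single_apply, apply_ite, sum_ite_irrel]

theorem sum_prod_sq_eq_prod_sum_sq (y : ∀ j, κ j → ℝ) :
    ∑ g : (∀ j, κ j), (∏ j, y j (g j)) ^ 2 = ∏ j, ∑ v, y j v ^ 2 := by
  rw [Fintype.prod_sum]
  simp [prod_pow]

theorem exists_signs_norm_tensorContract_le [∀ j, DecidableEq (κ j)] {θ t A : ℝ} (hθ : 0 < θ)
    (hιθ : Fintype.card ι * θ < 1) (ht0 : 0 < t) (ht : t < 1 / 2) (hA : 0 ≤ A)
    (hcount : (∑ j, (Fintype.card (κ j) : ℝ)) * Real.log (1 + 2 / θ) -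
      Fintype.card C * Real.log (1 - 2 * t) < t * A ^ 2) :
    ∃ M : C → (∀ j, κ j) → Bool,
      ‖tensorContract (fun c g => boolSign (M c g))‖ ≤ A / (1 - Fintype.card ι * θ) := by
  have hnet : ∀ j, ∃ Y : Finset (EuclideanSpace ℝ (κ j)),
      (Y : Set (EuclideanSpace ℝ (κ j))) ⊆ closedBall 0 1 ∧
      (#Y : ℝ) ≤ (1 + 2 / θ) ^ Fintype.card (κ j) ∧ closedBall 0 1 ⊆ ⋃ y ∈ Y, closedBall y θ :=
    fun j => by simpa using exists_finset_closedBall_subset_biUnion (E := EuclideanSpace ℝ (κ j)) hθ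
  choose Y hYball hYcard hYcover using hnet
  set tensor : (∀ j, EuclideanSpace ℝ (κ j)) → (∀ j, κ j) → ℝ := fun y g => ∏ j, y j (g j)
  set 𝒜 := (Fintype.piFinset Y).image tensor
  have h𝒜 : ∀ a ∈ 𝒜, ∑ g, a g ^ 2 ≤ 1 := by
    simp only [𝒜, mem_image, Fintype.mem_piFinset]
    rintro _ ⟨y, hy, rfl⟩
    rw [sum_prod_sq_eq_prod_sum_sq]
    refine prod_le_one (fun _ _ => by positivity) fun j _ => ?_
    rw [← EuclideanSpace.real_norm_sq_eq]
    exact pow_le_one₀ (norm_nonneg _) (mem_closedBall_zero_iff.1 (hYball j (hy j)))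
  have hcard : (#𝒜 : ℝ) < (1 - 2 * t) ^ Fintype.card C * Real.exp (t * A ^ 2) := by
    calc (#𝒜 : ℝ) ≤ ∏ j, (#(Y j) : ℝ) := by
          exact_mod_cast card_image_le.trans (Fintype.card_piFinset Y).le
      _ ≤ ∏ j, (1 + 2 / θ) ^ Fintype.card (κ j) :=
          prod_le_prod (fun _ _ => Nat.cast_nonneg _) fun j _ => hYcard j
      _ = Real.exp ((∑ j, (Fintype.card (κ j) : ℝ)) * Real.log (1 + 2 / θ)) := by
          rw [sum_mul, Real.exp_sum]
          exact prod_congr rfl fun j _ => by rw [Real.exp_nat_mul, Real.exp_log (by positivity)]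
      _ < Real.exp (Fintype.card C * Real.log (1 - 2 * t) + t * A ^ 2) :=
          Real.exp_lt_exp.2 (by linarith)
      _ = (1 - 2 * t) ^ Fintype.card C * Real.exp (t * A ^ 2) := by
          rw [Real.exp_add, Real.exp_nat_mul, Real.exp_log (by linarith)]
  obtain ⟨M, hM⟩ := exists_signMatrix_forall_sum_sq_lt (C := C) 𝒜 h𝒜 ht0 ht hcard
  refine ⟨M, ContinuousMultilinearMap.opNorm_le_of_net _ hθ.le hιθ (fun j => Y j) hYball hYcover
    fun y hy => ?_⟩
  have := hM (tensor y) (mem_image_of_mem _ (Fintype.mem_piFinset.2 hy))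
  rw [← pow_le_pow_iff_left₀ (norm_nonneg _) hA two_ne_zero, EuclideanSpace.real_norm_sq_eq]
  simpa [tensorContract_apply, tensor, mul_comm] using this.le

end TensorContract

theorem EuclideanSpace.norm_toLp_le_one {ι : Type*} [Fintype ι] {x : ι → ℝ}
    (hx : ∑ i, x i ^ 2 ≤ 1) : ‖WithLp.toLp 2 x‖ ≤ 1 := by
  rw [EuclideanSpace.norm_eq]
  exact Real.sqrt_le_one.mpr (by simpa using hx)

section LastFactor

variable {m : ℕ} {α : Fin (m + 1) → Type*} [∀ j, Fintype (α j)]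

theorem sum_mul_prod_eq_sum_last (S : α (Fin.last m) → (∀ j : Fin m, α j.castSucc) → ℝ)
    (x : ∀ j, α j → ℝ) :
    ∑ f : (∀ j, α j), S (f (Fin.last m)) (Fin.init f) * ∏ j, x j (f j) =
      ∑ c, x (Fin.last m) c * ∑ g, S c g * ∏ j : Fin m, x j.castSucc (g j) := by
  rw [← (Fin.snocEquiv α).sum_comp, Fintype.sum_prod_type]
  refine sum_congr rfl fun c _ => ?_
  rw [mul_sum]
  refine sum_congr rfl fun g _ => ?_
  simp [Fin.snocEquiv, Fin.prod_univ_castSucc]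
  ring

theorem abs_sum_mul_prod_le_norm_tensorContract [∀ j, DecidableEq (α j)]
    (S : α (Fin.last m) → (∀ j : Fin m, α j.castSucc) → ℝ) (x : ∀ j, α j → ℝ)
    (hx : ∀ j, ∑ v, x j v ^ 2 ≤ 1) :
    |∑ f : (∀ j, α j), S (f (Fin.last m)) (Fin.init f) * ∏ j, x j (f j)| ≤
      ‖tensorContract S‖ := by
  set y : ∀ j : Fin m, EuclideanSpace ℝ (α j.castSucc) := fun j => WithLp.toLp 2 (x j.castSucc)
  have hpair : ∑ f : (∀ j, α j), S (f (Fin.last m)) (Fin.init f) * ∏ j, x j (f j) =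
      inner ℝ (WithLp.toLp 2 (x (Fin.last m))) (tensorContract S y) := by
    rw [sum_mul_prod_eq_sum_last, PiLp.inner_apply]
    simp [tensorContract_apply, y, mul_comm]
  rw [hpair]
  calc _ ≤ ‖WithLp.toLp 2 (x (Fin.last m))‖ * ‖tensorContract S y‖ := abs_real_inner_le_norm _ _
    _ ≤ 1 * (‖tensorContract S‖ * ∏ _j : Fin m, 1) := by
        gcongr
        · exact EuclideanSpace.norm_toLp_le_one (hx _)
        · exact (tensorContract S).le_opNorm_mul_prod_of_le fun j =>
            EuclideanSpace.norm_toLp_le_one (hx _)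
    _ = ‖tensorContract S‖ := by simp

end LastFactor

theorem injNorm_le {d : ℕ} {n : Fin d → ℕ} {T : ((j : Fin d) → Fin (n j)) → ℝ} {C : ℝ}
    (hC : 0 ≤ C) (h : ∀ x : (j : Fin d) → Fin (n j) → ℝ, (∀ j, ∑ v, x j v ^ 2 ≤ 1) →
      |∑ f, T f * ∏ j, x j (f j)| ≤ C) :
    injNorm T ≤ C :=
  Real.sSup_le (by rintro _ ⟨x, hx, rfl⟩; exact h x hx) hC

theorem exists_injNorm_le_one_sum_sq_eq_of_prod_le {m : ℕ} {n : Fin (m + 1) → ℕ}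
    (h : ∏ j : Fin m, n j.castSucc ≤ n (Fin.last m)) :
    ∃ T : ((j : Fin (m + 1)) → Fin (n j)) → ℝ, injNorm T ≤ 1 ∧
      ∑ f, T f ^ 2 = ∏ j : Fin m, (n j.castSucc : ℝ) := by
  obtain ⟨e⟩ : Nonempty (((j : Fin m) → Fin (n j.castSucc)) ↪ Fin (n (Fin.last m))) :=
    Function.Embedding.nonempty_of_card_le (by simpa using h)
  set S : Fin (n (Fin.last m)) → ((j : Fin m) → Fin (n j.castSucc)) → ℝ :=
    fun c g => if c = e g then 1 else 0
  refine ⟨fun f => S (f (Fin.last m)) (Fin.init f), injNorm_le zero_le_one fun x hx => ?_, ?_⟩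
  · set a : ((j : Fin m) → Fin (n j.castSucc)) → ℝ := fun g => ∏ j, x j.castSucc (g j)
    have hpair : ∑ c, x (Fin.last m) c * ∑ g, S c g * a g = ∑ g, a g * x (Fin.last m) (e g) := by
      simp only [S, ite_mul, one_mul, zero_mul, mul_sum]
      rw [sum_comm]
      simp [mul_comm]
    have ha : ∑ g, a g ^ 2 ≤ 1 := by
      rw [sum_prod_sq_eq_prod_sum_sq]
      exact prod_le_one (fun _ _ => by positivity) fun j _ => hx _
    have hxe : ∑ g, x (Fin.last m) (e g) ^ 2 ≤ 1 := by
      rw [← sum_map univ e (fun c => x (Fin.last m) c ^ 2)]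
      exact (sum_le_sum_of_subset_of_nonneg (subset_univ _) fun _ _ _ => sq_nonneg _).trans
        (hx _)
    rw [sum_mul_prod_eq_sum_last, hpair, ← sq_le_one_iff_abs_le_one]
    calc _ ≤ (∑ g, a g ^ 2) * ∑ g, x (Fin.last m) (e g) ^ 2 := sum_mul_sq_le_sq_mul_sq _ _ _
      _ ≤ 1 * 1 := by gcongr
      _ = 1 := one_mul 1
  · rw [← (Fin.snocEquiv _).sum_comp, Fintype.sum_prod_type, sum_comm]
    simp [S, Fin.snocEquiv]

theorem sub_one_mul_log_add_log_ten_lt {D : ℝ} (hD : 3 ≤ D) :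
    (D - 1) * Real.log (14 * D + 1) + Real.log 10 < 9 * (6 * D + 1) ^ 2 * D / 980 := by
  have hlog_pow : ∀ {x y : ℝ} {a b : ℕ}, 0 < x → x ^ a ≤ y ^ b →
      a * Real.log x ≤ b * Real.log y := fun hx h => by
    rw [← Real.log_pow, ← Real.log_pow]
    exact Real.log_le_log (by positivity) h
  -- At `D = 3` the margin is about `0.01`, hence the sharp bounds on `log 43` and `log 10`.
  have h43 : 2 * Real.log 43 ≤ 11 * Real.log 2 := by
    exact_mod_cast hlog_pow (by norm_num) (by norm_num : (43 : ℝ) ^ 2 ≤ 2 ^ 11)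
  have h10 : 3 * Real.log 10 ≤ 10 * Real.log 2 := by
    exact_mod_cast hlog_pow (by norm_num) (by norm_num : (10 : ℝ) ^ 3 ≤ 2 ^ 10)
  have hconcave : Real.log (14 * D + 1) ≤ Real.log 43 + (14 * D + 1) / 43 - 1 := by
    have := Real.log_le_sub_one_of_pos (x := (14 * D + 1) / 43) (by positivity)
    rw [Real.log_div (by positivity) (by norm_num)] at this
    linarith
  nlinarith [mul_le_mul_of_nonneg_left hconcave (by linarith : (0 : ℝ) ≤ D - 1),
    Real.log_two_lt_d9]

theorem exists_signs_abs_sum_le_of_two_le {m : ℕ} (hm : 2 ≤ m) {n : Fin (m + 1) → ℕ}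
    (hmono : Monotone n) (hpos : 0 < n (Fin.last m)) :
    ∃ ε : ((j : Fin (m + 1)) → Fin (n j)) → Bool,
      ∀ x : (j : Fin (m + 1)) → Fin (n j) → ℝ, (∀ j, ∑ v, x j v ^ 2 ≤ 1) →
        |∑ f, boolSign (ε f) * ∏ j, x j (f j)| ≤ √((m + 1) ^ 3 * n (Fin.last m)) := by
  set D : ℝ := m + 1
  set N := n (Fin.last m)
  have hD : 3 ≤ D := by simp only [D]; exact_mod_cast Nat.succ_le_succ hm
  have hN : (1 : ℝ) ≤ N := by exact_mod_cast hpos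
  set θ : ℝ := 1 / (7 * D)
  set B : ℝ := √(D ^ 3 * N)
  have hmθ : 1 - m * θ = (6 * D + 1) / (7 * D) := by
    simp only [θ, D]
    field_simp
    ring
  have hmθ_pos : 0 < 1 - m * θ := by rw [hmθ]; positivity
  have hsum : ∑ j : Fin m, (n j.castSucc : ℝ) ≤ m * N :=
    calc ∑ j : Fin m, (n j.castSucc : ℝ) ≤ ∑ _j : Fin m, (N : ℝ) :=
          sum_le_sum fun j _ => by exact_mod_cast hmono (Fin.le_last _)
      _ = m * N := by simp
  have hcount : (∑ j : Fin m, (Fintype.card (Fin (n j.castSucc)) : ℝ)) * Real.log (1 + 2 / θ) -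
      Fintype.card (Fin N) * Real.log (1 - 2 * (9 / 20)) < 9 / 20 * ((1 - m * θ) * B) ^ 2 := by
    have h1 : 1 + 2 / θ = 14 * D + 1 := by
      simp only [θ]
      field_simp
      ring
    have h2 : Real.log (1 - 2 * (9 / 20) : ℝ) = -Real.log 10 := by
      rw [← Real.log_inv]
      norm_num
    have h3 : 9 / 20 * ((1 - m * θ) * B) ^ 2 = N * (9 * (6 * D + 1) ^ 2 * D / 980) := by
      rw [mul_pow, Real.sq_sqrt (by positivity), hmθ]
      field_simp
      ring
    have hm' : (m : ℝ) = D - 1 := by simp [D]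
    simp only [Fintype.card_fin, h1, h2, h3]
    nlinarith [mul_le_mul_of_nonneg_right hsum (Real.log_nonneg (by linarith) :
      0 ≤ Real.log (14 * D + 1)), sub_one_mul_log_add_log_ten_lt hD]
  obtain ⟨M, hM⟩ := exists_signs_norm_tensorContract_le (ι := Fin m)
    (κ := fun j => Fin (n j.castSucc)) (C := Fin N) (by positivity) (by simp; linarith)
    (by norm_num) (by norm_num) (by positivity) hcount
  rw [Fintype.card_fin, mul_div_cancel_left₀ _ hmθ_pos.ne'] at hM
  refine ⟨fun f => M (f (Fin.last m)) (Fin.init f), fun x hx => ?_⟩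
  have := abs_sum_mul_prod_le_norm_tensorContract (fun c g => boolSign (M c g)) x hx
  exact this.trans hM

theorem exists_injNorm_le_one_sum_sq_eq_of_two_le {m : ℕ} (hm : 2 ≤ m)
    {n : Fin (m + 1) → ℕ} (hmono : Monotone n) (hpos : 0 < n (Fin.last m)) :
    ∃ T : ((j : Fin (m + 1)) → Fin (n j)) → ℝ, injNorm T ≤ 1 ∧
      ∑ f, T f ^ 2 = (∏ j : Fin m, (n j.castSucc : ℝ)) / (m + 1) ^ 3 := by
  obtain ⟨ε, hε⟩ := exists_signs_abs_sum_le_of_two_le hm hmono hpos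
  set B : ℝ := √((m + 1) ^ 3 * n (Fin.last m))
  have hN : (0 : ℝ) < n (Fin.last m) := by exact_mod_cast hpos
  have hB : 0 < B := by positivity
  refine ⟨fun f => boolSign (ε f) / B, injNorm_le zero_le_one fun x hx => ?_, ?_⟩
  · simp only [div_mul_eq_mul_div, ← sum_div, abs_div, abs_of_pos hB]
    rw [div_le_one hB]
    exact hε x hx
  · have hB2 : B ^ 2 = (m + 1) ^ 3 * n (Fin.last m) := Real.sq_sqrt (by positivity)
    simp only [div_pow, boolSign_sq, hB2, sum_const, card_univ, Fintype.card_pi, Fintype.card_fin,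
      nsmul_eq_mul, Fin.prod_univ_castSucc]
    push_cast
    field_simp

theorem Real.rpow_neg_three_div_two {x : ℝ} (hx : 0 ≤ x) : x ^ (-(3 : ℝ) / 2) = (√(x ^ 3))⁻¹ := by
  rw [Real.sqrt_eq_rpow, ← Real.rpow_natCast, ← Real.rpow_mul hx, ← Real.rpow_neg hx]
  norm_num

/-- For `n_1 ≤ ⋯ ≤ n_d` (here `d = m+1`), the natural identification
`Φ : ℓ_2^{n_1} ⊗_ε ⋯ ⊗_ε ℓ_2^{n_d} → ℓ_2^{n_1⋯n_d}` has norm at least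
`d^{-3/2}(n_1⋯n_{d-1})^{1/2}`: some `T` with injective norm at most one has Euclidean
norm at least `d^{-3/2}(n_1⋯n_{d-1})^{1/2}`. -/
theorem stmt14 (m : ℕ) (n : Fin (m + 1) → ℕ) (hmono : Monotone n)
    (hpos : ∀ j, 0 < n j) :
    ∃ T : ((j : Fin (m + 1)) → Fin (n j)) → ℝ, injNorm T ≤ 1 ∧
      ((m + 1 : ℝ)) ^ (-(3 : ℝ) / 2) * Real.sqrt (∏ j : Fin m, (n j.castSucc : ℝ)) ≤
        Real.sqrt (∑ f : (j : Fin (m + 1)) → Fin (n j), T f ^ 2) := by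
  rw [Real.rpow_neg_three_div_two (by positivity)]
  rcases le_or_gt m 1 with hm | hm
  · have hprod : ∏ j : Fin m, n j.castSucc ≤ n (Fin.last m) := by
      interval_cases m
      · simpa using Nat.succ_le_of_lt (hpos 0)
      · simpa using hmono (Fin.zero_le 1)
    obtain ⟨T, hT, hsq⟩ := exists_injNorm_le_one_sum_sq_eq_of_prod_le hprod
    refine ⟨T, hT, ?_⟩
    rw [hsq]
    refine mul_le_of_le_one_left (Real.sqrt_nonneg _) (inv_le_one_of_one_le₀ ?_)
    exact Real.one_le_sqrt.2 (one_le_pow₀ (by linarith))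
  · obtain ⟨T, hT, hsq⟩ := exists_injNorm_le_one_sum_sq_eq_of_two_le hm hmono (hpos _)
    refine ⟨T, hT, ?_⟩
    rw [hsq, Real.sqrt_div' _ (by positivity), inv_mul_eq_div]
end
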